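/- Let τ ∈ FreeMagma (Option α) be a tree with |τ| ≥ 2 and let v be a tree with |v| < |τ|. Then for every tree t there exists a unique tree t' such that t ~_{τ,v} t' and t' is τ-irreducible (τ is not a subtree of t'). -/

import Mathlib

/-- The length of a tree: the number of leaves labeled by a letter of `α`. -/
def treeLen {α : Type*} : FreeMagma (Option α) → ℕ
  | FreeMagma.of none => 0
  | FreeMagma.of (some _) => 1
  | FreeMagma.mul t₁ t₂ => treeLen t₁ + treeLen t₂

/-- `s` is a subtree of `t`. -/
def IsSubtree {β : Type*} (s : FreeMagma β) : FreeMagma β → Prop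
  | FreeMagma.of a => s = FreeMagma.of a
  | FreeMagma.mul t₁ t₂ => s = FreeMagma.mul t₁ t₂ ∨ IsSubtree s t₁ ∨ IsSubtree s t₂

/-!
Orient the relation as the rewriting rule `τ ↦ v`, applied at any position. Every rewrite lowers
the length, so every tree reaches a `τ`-irreducible tree. Since `τ` is a fixed tree, two
occurrences of `τ` in a tree are either disjoint or equal (`τ` is no proper subtree of itself),
so the rule has no critical pairs and is confluent; hence two trees are congruent iff they
rewrite to a common tree, and two congruent irreducible trees are equal.
-/

open Relation

namespace IsSubtree

variable {β : Type*}

theorem refl (t : FreeMagma β) : IsSubtree t t := by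
  cases t with
  | of _ => rfl
  | mul _ _ => exact Or.inl rfl

theorem length_le {s t : FreeMagma β} (h : IsSubtree s t) : s.length ≤ t.length := by
  induction t with
  | ih1 _ => cases h; rfl
  | ih2 t₁ t₂ ih₁ ih₂ =>
    rcases h with rfl | h | h
    · rfl
    · exact (ih₁ h).trans (by simp)
    · exact (ih₂ h).trans (by simp)

end IsSubtree

section Rewriting

variable {β : Type*}

theorem not_isSubtree_mul_left (x y : FreeMagma β) : ¬ IsSubtree (x * y) x := fun h => by
  have := h.length_le
  simp only [FreeMagma.length] at this
  have := y.length_pos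
  omega

theorem not_isSubtree_mul_right (x y : FreeMagma β) : ¬ IsSubtree (x * y) y := fun h => by
  have := h.length_le
  simp only [FreeMagma.length] at this
  have := x.length_pos
  omega

inductive RewriteStep (τ v : FreeMagma β) : FreeMagma β → FreeMagma β → Prop
  | base : RewriteStep τ v τ v
  | left {a b c} : RewriteStep τ v a b → RewriteStep τ v (a * c) (b * c)
  | right {a b c} : RewriteStep τ v a b → RewriteStep τ v (c * a) (c * b)

variable {τ v : FreeMagma β}

theorem RewriteStep.isSubtree {t t' : FreeMagma β} (h : RewriteStep τ v t t') :
    IsSubtree τ t := by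
  induction h with
  | base => exact .refl τ
  | left _ ih => exact Or.inr (Or.inl ih)
  | right _ ih => exact Or.inr (Or.inr ih)

theorem exists_rewriteStep_of_isSubtree {t : FreeMagma β} (h : IsSubtree τ t) :
    ∃ t', RewriteStep τ v t t' := by
  induction t with
  | ih1 _ => cases h; exact ⟨v, .base⟩
  | ih2 t₁ t₂ ih₁ ih₂ =>
    rcases h with h | h | h
    · exact h ▸ ⟨v, .base⟩
    · obtain ⟨t', ht'⟩ := ih₁ h; exact ⟨_, .left ht'⟩
    · obtain ⟨t', ht'⟩ := ih₂ h; exact ⟨_, .right ht'⟩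

theorem RewriteStep.diamond {t a b : FreeMagma β} (ha : RewriteStep τ v t a)
    (hb : RewriteStep τ v t b) :
    a = b ∨ ∃ c, RewriteStep τ v a c ∧ RewriteStep τ v b c := by
  induction ha generalizing b with
  | base =>
    cases hb with
    | base => exact Or.inl rfl
    | left h => exact absurd h.isSubtree (not_isSubtree_mul_left _ _)
    | right h => exact absurd h.isSubtree (not_isSubtree_mul_right _ _)
  | left h ih =>
    cases hb with
    | base => exact absurd h.isSubtree (not_isSubtree_mul_left _ _)
    | left h' =>
      rcases ih h' with rfl | ⟨c, hc, hc'⟩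
      · exact Or.inl rfl
      · exact Or.inr ⟨_, .left hc, .left hc'⟩
    | right h' => exact Or.inr ⟨_, .right h', .left h⟩
  | right h ih =>
    cases hb with
    | base => exact absurd h.isSubtree (not_isSubtree_mul_right _ _)
    | left h' => exact Or.inr ⟨_, .left h', .right h⟩
    | right h' =>
      rcases ih h' with rfl | ⟨c, hc, hc'⟩
      · exact Or.inl rfl
      · exact Or.inr ⟨_, .right hc, .right hc'⟩

theorem eq_of_reflTransGen_of_not_isSubtree {a b : FreeMagma β} (ha : ¬ IsSubtree τ a)
    (h : ReflTransGen (RewriteStep τ v) a b) : a = b := by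
  rcases h.cases_head with rfl | ⟨c, hc, _⟩
  · rfl
  · exact absurd hc.isSubtree ha

theorem RewriteStep.reflTransGen_mul_right {a b : FreeMagma β}
    (h : ReflTransGen (RewriteStep τ v) a b) (c : FreeMagma β) :
    ReflTransGen (RewriteStep τ v) (a * c) (b * c) :=
  h.lift (· * c) fun _ _ => .left

theorem RewriteStep.reflTransGen_mul_left {a b : FreeMagma β}
    (h : ReflTransGen (RewriteStep τ v) a b) (c : FreeMagma β) :
    ReflTransGen (RewriteStep τ v) (c * a) (c * b) :=
  h.lift (c * ·) fun _ _ => .right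

variable (τ v) in
def joinCon : Con (FreeMagma β) where
  r := Join (ReflTransGen (RewriteStep τ v))
  iseqv := equivalence_join_reflTransGen fun _ _ _ ha hb => by
    rcases ha.diamond hb with rfl | ⟨d, hd, hd'⟩
    · exact ⟨_, .refl, .refl⟩
    · exact ⟨d, .single hd, .single hd'⟩
  mul' := by
    rintro a₁ b₁ a₂ b₂ ⟨c₁, ha₁, hb₁⟩ ⟨c₂, ha₂, hb₂⟩
    open RewriteStep in
    exact ⟨c₁ * c₂, (reflTransGen_mul_right ha₁ _).trans (reflTransGen_mul_left ha₂ _),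
      (reflTransGen_mul_right hb₁ _).trans (reflTransGen_mul_left hb₂ _)⟩

theorem RewriteStep.rel_conGen {a b : FreeMagma β} (h : RewriteStep τ v a b) :
    conGen (fun x y => x = τ ∧ y = v) a b := by
  induction h with
  | base => exact ConGen.Rel.of _ _ ⟨rfl, rfl⟩
  | left _ ih => exact (conGen _).mul ih ((conGen _).refl _)
  | right _ ih => exact (conGen _).mul ((conGen _).refl _) ih

theorem conGen_of_reflTransGen {a b : FreeMagma β} (h : ReflTransGen (RewriteStep τ v) a b) :
    conGen (fun x y => x = τ ∧ y = v) a b := by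
  induction h with
  | refl => exact (conGen _).refl _
  | tail _ hstep ih => exact (conGen _).trans ih hstep.rel_conGen

variable (τ v) in
theorem conGen_eq_joinCon : conGen (fun x y => x = τ ∧ y = v) = joinCon τ v := by
  refine le_antisymm (Con.conGen_le.2 ?_) (Con.le_def.2 ?_)
  · rintro _ _ ⟨rfl, rfl⟩
    exact ⟨_, .single .base, .refl⟩
  · rintro a b ⟨c, hac, hbc⟩
    exact (conGen _).trans (conGen_of_reflTransGen hac)
      ((conGen _).symm (conGen_of_reflTransGen hbc))

end Rewriting

section Termination

variable {α : Type*} {τ v : FreeMagma (Option α)}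

theorem RewriteStep.treeLen_add {t t' : FreeMagma (Option α)} (h : RewriteStep τ v t t') :
    treeLen t' + treeLen τ = treeLen t + treeLen v := by
  induction h with
  | base => exact Nat.add_comm _ _
  | left _ ih => simp only [treeLen] at ih ⊢; omega
  | right _ ih => simp only [treeLen] at ih ⊢; omega

theorem exists_reflTransGen_not_isSubtree (hv : treeLen v < treeLen τ)
    (t : FreeMagma (Option α)) :
    ∃ t', ReflTransGen (RewriteStep τ v) t t' ∧ ¬ IsSubtree τ t' := by
  induction hn : treeLen t using Nat.strong_induction_on generalizing t with
  | _ n ih =>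
    by_cases hτt : IsSubtree τ t
    · obtain ⟨t₁, ht₁⟩ := exists_rewriteStep_of_isSubtree (v := v) hτt
      obtain ⟨t', h₁, h₂⟩ := ih _ (by have := ht₁.treeLen_add; omega) t₁ rfl
      exact ⟨t', .head ht₁ h₁, h₂⟩
    · exact ⟨t, .refl, hτt⟩

end Termination

theorem tree_unique_canonical_representative_general {α : Type*}
    (τ : FreeMagma (Option α))
    (v : FreeMagma (Option α)) (hv : treeLen v < treeLen τ) (t : FreeMagma (Option α)) :
    ∃! t' : FreeMagma (Option α),
      (conGen (fun x y => x = τ ∧ y = v)) t t' ∧ ¬ IsSubtree τ t' := by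
  rw [conGen_eq_joinCon]
  obtain ⟨t', ht', hirr⟩ := exists_reflTransGen_not_isSubtree hv t
  refine ⟨t', ⟨⟨t', ht', .refl⟩, hirr⟩, ?_⟩
  rintro y ⟨hy, hyirr⟩
  obtain ⟨c, hyc, ht'c⟩ := (joinCon τ v).trans ((joinCon τ v).symm hy) ⟨t', ht', .refl⟩
  exact (eq_of_reflTransGen_of_not_isSubtree hyirr hyc).trans
    (eq_of_reflTransGen_of_not_isSubtree hirr ht'c).symm

/-- For a tree `τ` with `|τ| ≥ 2` and `|v| < |τ|`, every tree `t` has a unique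
`τ`-irreducible canonical representative modulo the congruence generated by `τ ~ v`. -/
theorem tree_unique_canonical_representative {α : Type*}
    (τ : FreeMagma (Option α)) (hτ : 2 ≤ treeLen τ)
    (v : FreeMagma (Option α)) (hv : treeLen v < treeLen τ) (t : FreeMagma (Option α)) :
    ∃! t' : FreeMagma (Option α),
      (conGen (fun x y => x = τ ∧ y = v)) t t' ∧ ¬ IsSubtree τ t' :=
  tree_unique_canonical_representative_general τ v hv t
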